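/- arXiv:2410.08838 — 2 statements merged into one kernel-verified Lean document; each statement's English description precedes it below -/
import Mathlib

section
/- Let J > 1 and let S be the operator on ℓ²(ℕ) (with orthonormal basis (e_n)_{n≥0}) defined by S e₀ = 0 and S e_n = (√(n(n+1))/(2n+1)) (1/J)^{2n} e_{n−1} for n ≥ 1. Then S is compact, σ(S) = σ_a(S) = σ_uw(S) = E(S) = {0}, and S does not satisfy property (UW_E). -/
noncomputable section

open Set MeasureTheory

/-- The operator `T - λ·I`. -/
def opShift {E : Type*} [NormedAddCommGroup E] [InnerProductSpace ℂ E]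
    (T : E →L[ℂ] E) (lam : ℂ) : E →L[ℂ] E :=
  T - lam • ContinuousLinearMap.id ℂ E

/-- Upper semi-Fredholm: closed range and finite-dimensional kernel. -/
def IsUSF {E : Type*} [NormedAddCommGroup E] [InnerProductSpace ℂ E]
    (T : E →L[ℂ] E) : Prop :=
  IsClosed (LinearMap.range (T : E →ₗ[ℂ] E) : Set E) ∧ FiniteDimensional ℂ (LinearMap.ker (T : E →ₗ[ℂ] E))

/-- Lower semi-Fredholm: closed range and finite codimension. -/
def IsLSF {E : Type*} [NormedAddCommGroup E] [InnerProductSpace ℂ E]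
    (T : E →L[ℂ] E) : Prop :=
  IsClosed (LinearMap.range (T : E →ₗ[ℂ] E) : Set E) ∧ FiniteDimensional ℂ (E ⧸ LinearMap.range (T : E →ₗ[ℂ] E))

/-- Fredholm operator. -/
def IsFredholmOp {E : Type*} [NormedAddCommGroup E] [InnerProductSpace ℂ E]
    (T : E →L[ℂ] E) : Prop :=
  IsUSF T ∧ IsLSF T

/-- `ind T ≤ 0`, i.e. `dim ker T ≤ codim ran T`. -/
def indexNonpos {E : Type*} [NormedAddCommGroup E] [InnerProductSpace ℂ E]
    (T : E →L[ℂ] E) : Prop :=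
  Module.rank ℂ (LinearMap.ker (T : E →ₗ[ℂ] E)) ≤ Module.rank ℂ (E ⧸ LinearMap.range (T : E →ₗ[ℂ] E))

/-- `ind T = 0`, i.e. `dim ker T = codim ran T`. -/
def indexZero {E : Type*} [NormedAddCommGroup E] [InnerProductSpace ℂ E]
    (T : E →L[ℂ] E) : Prop :=
  Module.rank ℂ (LinearMap.ker (T : E →ₗ[ℂ] E)) = Module.rank ℂ (E ⧸ LinearMap.range (T : E →ₗ[ℂ] E))

/-- The approximate point spectrum: `λ` such that `T - λ` is not bounded below. -/
def specA {E : Type*} [NormedAddCommGroup E] [InnerProductSpace ℂ E]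
    (T : E →L[ℂ] E) : Set ℂ :=
  {lam | ¬ ∃ c > 0, ∀ x : E, c * ‖x‖ ≤ ‖T x - lam • x‖}

/-- The upper semi-Weyl spectrum. -/
def specUW {E : Type*} [NormedAddCommGroup E] [InnerProductSpace ℂ E]
    (T : E →L[ℂ] E) : Set ℂ :=
  {lam | ¬ (IsUSF (opShift T lam) ∧ indexNonpos (opShift T lam))}

/-- The Weyl spectrum. -/
def specW {E : Type*} [NormedAddCommGroup E] [InnerProductSpace ℂ E]
    (T : E →L[ℂ] E) : Set ℂ :=
  {lam | ¬ (IsFredholmOp (opShift T lam) ∧ indexZero (opShift T lam))}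

/-- `lam` is an isolated point of the set `S`. -/
def IsIsolatedIn (S : Set ℂ) (lam : ℂ) : Prop :=
  lam ∈ S ∧ ∃ ε > 0, S ∩ Metric.ball lam ε = {lam}

/-- `E(T)`: the isolated points of the spectrum that are eigenvalues. -/
def Eset {E : Type*} [NormedAddCommGroup E] [InnerProductSpace ℂ E]
    (T : E →L[ℂ] E) : Set ℂ :=
  {lam | IsIsolatedIn (spectrum ℂ T) lam ∧ ∃ x : E, x ≠ 0 ∧ T x = lam • x}

/-- `E₀(T)`: the isolated points of the spectrum that are eigenvalues of finite multiplicity. -/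
def E0set {E : Type*} [NormedAddCommGroup E] [InnerProductSpace ℂ E]
    (T : E →L[ℂ] E) : Set ℂ :=
  {lam | IsIsolatedIn (spectrum ℂ T) lam ∧ (∃ x : E, x ≠ 0 ∧ T x = lam • x) ∧
    FiniteDimensional ℂ (LinearMap.ker (opShift T lam : E →ₗ[ℂ] E))}

/-- Property `(UW_E)`: `σ_a(T) \ σ_uw(T) = E(T)`. -/
def PropUWE {E : Type*} [NormedAddCommGroup E] [InnerProductSpace ℂ E]
    (T : E →L[ℂ] E) : Prop :=
  specA T \ specUW T = Eset T

/-- Property `(V_E)`: `σ(T) \ σ_uw(T) = E(T)`. -/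
def PropVE {E : Type*} [NormedAddCommGroup E] [InnerProductSpace ℂ E]
    (T : E →L[ℂ] E) : Prop :=
  spectrum ℂ T \ specUW T = Eset T

/-- Property `(W_E)`: `σ(T) \ σ_w(T) = E(T)`. -/
def PropWE {E : Type*} [NormedAddCommGroup E] [InnerProductSpace ℂ E]
    (T : E →L[ℂ] E) : Prop :=
  spectrum ℂ T \ specW T = Eset T

/-- Weyl's theorem: `σ(T) \ σ_w(T) = E₀(T)`. -/
def WeylsTheorem {E : Type*} [NormedAddCommGroup E] [InnerProductSpace ℂ E]
    (T : E →L[ℂ] E) : Prop :=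
  spectrum ℂ T \ specW T = E0set T

/-- `T` is hypercyclic: some orbit is dense. -/
def Hypercyclic {E : Type*} [NormedAddCommGroup E] [InnerProductSpace ℂ E]
    (T : E →L[ℂ] E) : Prop :=
  ∃ x : E, Dense (Set.range fun n : ℕ => (T ^ n) x)

/-- `T` is supercyclic: the scaled orbit of some vector is dense. -/
def Supercyclic {E : Type*} [NormedAddCommGroup E] [InnerProductSpace ℂ E]
    (T : E →L[ℂ] E) : Prop :=
  ∃ x : E, Dense {y : E | ∃ (c : ℂ) (n : ℕ), y = c • (T ^ n) x}

/-- The ascent of `T`, as an extended natural number. -/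
def ascent {E : Type*} [NormedAddCommGroup E] [InnerProductSpace ℂ E]
    (T : E →L[ℂ] E) : ℕ∞ :=
  sInf ((fun n : ℕ => (n : ℕ∞)) '' {n : ℕ | LinearMap.ker ((T ^ n : E →L[ℂ] E) : E →ₗ[ℂ] E) =
    LinearMap.ker ((T ^ (n + 1) : E →L[ℂ] E) : E →ₗ[ℂ] E)})

/-- The descent of `T`, as an extended natural number. -/
def descent {E : Type*} [NormedAddCommGroup E] [InnerProductSpace ℂ E]
    (T : E →L[ℂ] E) : ℕ∞ :=
  sInf ((fun n : ℕ => (n : ℕ∞)) ''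
    {n : ℕ | LinearMap.range ((T ^ n : E →L[ℂ] E) : E →ₗ[ℂ] E) =
      LinearMap.range ((T ^ (n + 1) : E →L[ℂ] E) : E →ₗ[ℂ] E)})

/-- Browder operator: Fredholm with equal finite ascent and descent. -/
def IsBrowder {E : Type*} [NormedAddCommGroup E] [InnerProductSpace ℂ E]
    (T : E →L[ℂ] E) : Prop :=
  IsFredholmOp T ∧ ascent T = descent T ∧ ascent T < ⊤

/-- The Browder spectrum. -/
def specB {E : Type*} [NormedAddCommGroup E] [InnerProductSpace ℂ E]
    (T : E →L[ℂ] E) : Set ℂ :=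
  {lam | ¬ IsBrowder (opShift T lam)}

/-- The essential spectrum. -/
def specE {E : Type*} [NormedAddCommGroup E] [InnerProductSpace ℂ E]
    (T : E →L[ℂ] E) : Set ℂ :=
  {lam | ¬ IsFredholmOp (opShift T lam)}

/-- The left essential spectrum. -/
def specLE {E : Type*} [NormedAddCommGroup E] [InnerProductSpace ℂ E]
    (T : E →L[ℂ] E) : Set ℂ :=
  {lam | ¬ IsUSF (opShift T lam)}

/-- The right essential spectrum. -/
def specRE {E : Type*} [NormedAddCommGroup E] [InnerProductSpace ℂ E]
    (T : E →L[ℂ] E) : Set ℂ :=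
  {lam | ¬ IsLSF (opShift T lam)}

/-- The Hilbert space `ℓ²(ℕ)`. -/
abbrev l2 := lp (fun _ : ℕ => ℂ) 2

/-!
The operator `S` is a weighted backward shift, `S e_{k+1} = w_k e_k`, whose weights satisfy
`0 < |w_k| ≤ q^(2(k+1))` with `q = 1/J < 1`. Hence `‖S^n‖ ≤ q^(n(n+1))`, and `λ ∈ σ(S)` gives
`|λ|^n ≤ ‖S^n‖`, so `|λ| ≤ q^(n+1)` for all `n`: `σ(S) = {0}`. As the weights tend to `0`, `S` is
the norm limit of its finite-rank truncations, hence compact.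

Since `S e₀ = 0`, the point `0` is an eigenvalue, so it lies in `σ_a(S)` and in `E(S)`. The range
of `S` contains every `e_k`, so it is dense; were `S` upper semi-Fredholm, its range would be
closed, hence everything, and `ind S ≤ 0` would force `ker S = 0`. So `0 ∈ σ_uw(S)`, and
`σ_a(S) \ σ_uw(S) = ∅ ≠ {0} = E(S)`.
-/

open scoped ENNReal
open Finset Filter Topology

theorem lp.norm_le_mul_norm_of_injective {ι : Type*} {E : ι → Type*}
    [∀ i, NormedAddCommGroup (E i)] {p : ℝ≥0∞} [Fact (1 ≤ p)] (hp : 0 < p.toReal)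
    {x y : lp E p} {C : ℝ} (hC : 0 ≤ C) (f : ι → ι) (hf : Function.Injective f)
    (h : ∀ i, ‖y i‖ ≤ C * ‖x (f i)‖) :
    ‖y‖ ≤ C * ‖x‖ := by
  classical
  refine lp.norm_le_of_forall_sum_le hp (mul_nonneg hC (norm_nonneg x)) fun s ↦ ?_
  calc ∑ i ∈ s, ‖y i‖ ^ p.toReal
      ≤ ∑ i ∈ s, C ^ p.toReal * ‖x (f i)‖ ^ p.toReal := sum_le_sum fun i _ ↦ by
        rw [← Real.mul_rpow hC (norm_nonneg _)]
        exact Real.rpow_le_rpow (norm_nonneg _) (h i) hp.le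
    _ = C ^ p.toReal * ∑ i ∈ s.image f, ‖x i‖ ^ p.toReal := by
        rw [sum_image fun _ _ _ _ hij ↦ hf hij, mul_sum]
    _ ≤ C ^ p.toReal * ‖x‖ ^ p.toReal := by
        gcongr
        exact lp.sum_rpow_le_norm_rpow hp x _
    _ = (C * ‖x‖) ^ p.toReal := (Real.mul_rpow hC (norm_nonneg x)).symm

instance lp.instNontrivial {ι : Type*} [Nonempty ι] {E : ι → Type*}
    [∀ i, NormedAddCommGroup (E i)] [∀ i, Nontrivial (E i)] {p : ℝ≥0∞} :
    Nontrivial (lp E p) := by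
  classical
  obtain ⟨i⟩ := ‹Nonempty ι›
  obtain ⟨a, ha⟩ := exists_ne (0 : E i)
  exact ⟨lp.single p i a, 0, fun h ↦ ha (by simpa using congr_arg (· i) h)⟩

/-- `S e_{k+1} = w k • e_k` and `S e₀ = 0`. -/
def IsWeightedBackwardShift (S : l2 →L[ℂ] l2) (w : ℕ → ℂ) : Prop :=
  ∀ x k, S x k = w k * x (k + 1)

def truncatedBackwardShift (w : ℕ → ℂ) (N : ℕ) : l2 →L[ℂ] l2 :=
  ∑ k ∈ range N, (w k • lp.evalCLM ℂ (fun _ : ℕ ↦ ℂ) 2 (k + 1)).smulRight (lp.single 2 k 1)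

theorem truncatedBackwardShift_apply (w : ℕ → ℂ) (N : ℕ) (x : l2) (m : ℕ) :
    truncatedBackwardShift w N x m = if m < N then w m * x (m + 1) else 0 := by
  simp only [truncatedBackwardShift, _root_.sum_apply, lp.coeFn_sum, Finset.sum_apply]
  simp [lp.evalCLM, Pi.single_apply]

theorem isCompactOperator_truncatedBackwardShift (w : ℕ → ℂ) (N : ℕ) :
    IsCompactOperator (truncatedBackwardShift w N) := by
  refine (compactOperator (RingHom.id ℂ) l2 l2).sum_mem fun k _ ↦ ?_
  -- despite its name, this lemma is about a locally compact codomain (here `ℂ`)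
  exact (isCompactOperator_of_locallyCompactSpace_dom
    (w k • lp.evalCLM ℂ (fun _ : ℕ ↦ ℂ) 2 (k + 1))).clm_comp
    (ContinuousLinearMap.toSpanSingleton ℂ (lp.single 2 k 1))

namespace IsWeightedBackwardShift

variable {S : l2 →L[ℂ] l2} {w : ℕ → ℂ}

theorem apply_single_zero (hS : IsWeightedBackwardShift S w) (a : ℂ) :
    S (lp.single 2 0 a) = 0 := by
  ext k
  rw [hS, lp.single_apply_ne 2 0 _ k.succ_ne_zero, mul_zero, lp.coeFn_zero, Pi.zero_apply]

theorem pow_apply (hS : IsWeightedBackwardShift S w) (n : ℕ) (x : l2) (k : ℕ) :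
    (S ^ n) x k = (∏ j ∈ range n, w (k + j)) * x (k + n) := by
  induction n generalizing x with
  | zero => simp
  | succ n ih =>
    rw [pow_succ, mul_apply_eq_comp, ih, hS, prod_range_succ, mul_assoc]
    rfl

theorem norm_pow_le (hS : IsWeightedBackwardShift S w) {q : ℝ} (hq0 : 0 ≤ q) (hq1 : q ≤ 1)
    (hw : ∀ k, ‖w k‖ ≤ q ^ (2 * (k + 1))) (n : ℕ) : ‖S ^ n‖ ≤ q ^ (n * (n + 1)) := by
  refine ContinuousLinearMap.opNorm_le_bound _ (by positivity) fun x ↦ ?_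
  refine lp.norm_le_mul_norm_of_injective (by norm_num) (by positivity) (· + n)
    (add_left_injective n) fun k ↦ ?_
  have hgauss : ∑ j ∈ range n, 2 * (j + 1) = n * (n + 1) := by
    induction n with
    | zero => rfl
    | succ n ih => rw [sum_range_succ, ih]; ring
  rw [hS.pow_apply, norm_mul, norm_prod, ← hgauss, ← prod_pow_eq_pow_sum]
  refine mul_le_mul_of_nonneg_right (prod_le_prod (fun _ _ ↦ norm_nonneg _) fun j _ ↦ ?_)
    (norm_nonneg _)
  exact (hw _).trans (pow_le_pow_of_le_one hq0 hq1 (by omega))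

theorem spectrum_subset_zero (hS : IsWeightedBackwardShift S w) {q : ℝ} (hq0 : 0 ≤ q)
    (hq1 : q < 1) (hw : ∀ k, ‖w k‖ ≤ q ^ (2 * (k + 1))) : spectrum ℂ S ⊆ {0} := by
  intro μ hμ
  have hbound : ∀ n, ‖μ‖ ≤ q ^ (n + 2) := fun n ↦ by
    have hpow : μ ^ (n + 1) ∈ spectrum ℂ (S ^ (n + 1)) := by
      rw [spectrum.map_pow]
      exact mem_image_of_mem _ hμ
    refine le_of_pow_le_pow_left₀ n.succ_ne_zero (by positivity) ?_
    calc ‖μ‖ ^ (n + 1) = ‖μ ^ (n + 1)‖ := (norm_pow _ _).symm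
      _ ≤ ‖S ^ (n + 1)‖ := spectrum.norm_le_norm_of_mem hpow
      _ ≤ q ^ ((n + 1) * (n + 1 + 1)) := hS.norm_pow_le hq0 hq1.le hw _
      _ = (q ^ (n + 2)) ^ (n + 1) := by ring
  have hlim : Tendsto (fun n ↦ q ^ (n + 2)) atTop (𝓝 0) :=
    (tendsto_pow_atTop_nhds_zero_of_lt_one hq0 hq1).comp (tendsto_add_atTop_nat 2)
  exact norm_le_zero_iff.mp (ge_of_tendsto' hlim hbound)

theorem single_mem_range (hS : IsWeightedBackwardShift S w) {i : ℕ} (hi : w i ≠ 0) (a : ℂ) :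
    lp.single 2 i a ∈ LinearMap.range (S : l2 →ₗ[ℂ] l2) := by
  refine ⟨(w i)⁻¹ • lp.single 2 (i + 1) a, ?_⟩
  ext k
  rw [ContinuousLinearMap.coe_coe, hS, lp.coeFn_smul, Pi.smul_apply, smul_eq_mul]
  rcases eq_or_ne k i with rfl | hki
  · rw [lp.single_apply_self, lp.single_apply_self, mul_inv_cancel_left₀ hi]
  · rw [lp.single_apply_ne 2 _ _ (by omega), lp.single_apply_ne 2 _ _ hki, mul_zero, mul_zero]

theorem dense_range (hS : IsWeightedBackwardShift S w) (hw : ∀ k, w k ≠ 0) :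
    Dense (LinearMap.range (S : l2 →ₗ[ℂ] l2) : Set l2) := fun x ↦
  mem_closure_of_tendsto (lp.hasSum_single (by norm_num) x)
    (Eventually.of_forall fun _ ↦ Submodule.sum_mem _ fun i _ ↦ hS.single_mem_range (hw i) _)

theorem norm_sub_truncatedBackwardShift_le (hS : IsWeightedBackwardShift S w) {N : ℕ} {ε : ℝ}
    (hε : 0 ≤ ε) (hw : ∀ k ≥ N, ‖w k‖ ≤ ε) : ‖S - truncatedBackwardShift w N‖ ≤ ε := by
  refine ContinuousLinearMap.opNorm_le_bound _ hε fun x ↦ ?_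
  refine lp.norm_le_mul_norm_of_injective (by norm_num) hε (· + 1) (add_left_injective 1)
    fun k ↦ ?_
  rw [sub_apply, lp.coeFn_sub, Pi.sub_apply, hS, truncatedBackwardShift_apply]
  split_ifs with hk
  · simpa using mul_nonneg hε (norm_nonneg _)
  · rw [sub_zero, norm_mul]
    exact mul_le_mul_of_nonneg_right (hw k (not_lt.mp hk)) (norm_nonneg _)

theorem isCompactOperator (hS : IsWeightedBackwardShift S w) (hw : Tendsto w atTop (𝓝 0)) :
    IsCompactOperator S := by
  refine isCompactOperator_of_tendsto (l := atTop) (F := truncatedBackwardShift w) ?_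
    (Eventually.of_forall (isCompactOperator_truncatedBackwardShift w))
  refine Metric.tendsto_atTop.mpr fun ε hε ↦ ?_
  obtain ⟨N, hN⟩ := Metric.tendsto_atTop.mp hw (ε / 2) (half_pos hε)
  refine ⟨N, fun n hn ↦ ?_⟩
  rw [dist_comm, dist_eq_norm]
  refine (hS.norm_sub_truncatedBackwardShift_le (half_pos hε).le fun k hk ↦ ?_).trans_lt
    (half_lt_self hε)
  simpa using (hN k (hn.trans hk)).le

end IsWeightedBackwardShift

section SpectralSets

variable {E : Type*} [NormedAddCommGroup E] [InnerProductSpace ℂ E]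

@[simp]
theorem opShift_zero (T : E →L[ℂ] E) : opShift T 0 = T := by
  simp [opShift]

theorem isUnit_opShift_of_notMem_spectrum {T : E →L[ℂ] E} {μ : ℂ} (h : μ ∉ spectrum ℂ T) :
    IsUnit (opShift T μ) := by
  have hneg : opShift T μ = -(algebraMap ℂ (E →L[ℂ] E) μ - T) := by
    rw [opShift, Algebra.algebraMap_eq_smul_one, neg_sub]
    rfl
  exact hneg ▸ (spectrum.notMem_iff.mp h).neg

theorem exists_pos_mul_norm_le_of_isUnit {A : E →L[ℂ] E} (hA : IsUnit A) :
    ∃ c > 0, ∀ x, c * ‖x‖ ≤ ‖A x‖ := by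
  obtain ⟨u, rfl⟩ := hA
  refine ⟨(‖(↑u⁻¹ : E →L[ℂ] E)‖ + 1)⁻¹, by positivity, fun x ↦ ?_⟩
  rw [inv_mul_le_iff₀ (by positivity)]
  calc ‖x‖ = ‖(↑u⁻¹ : E →L[ℂ] E) ((u : E →L[ℂ] E) x)‖ := by
        rw [← mul_apply_eq_comp, Units.inv_mul, one_apply_eq_self]
    _ ≤ ‖(↑u⁻¹ : E →L[ℂ] E)‖ * ‖(u : E →L[ℂ] E) x‖ := ContinuousLinearMap.le_opNorm _ _
    _ ≤ (‖(↑u⁻¹ : E →L[ℂ] E)‖ + 1) * ‖(u : E →L[ℂ] E) x‖ := by gcongr; linarith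

theorem isUSF_and_indexNonpos_of_isUnit {A : E →L[ℂ] E} (hA : IsUnit A) :
    IsUSF A ∧ indexNonpos A := by
  obtain ⟨u, rfl⟩ := hA
  have hker : LinearMap.ker (u : E →ₗ[ℂ] E) = ⊥ :=
    LinearMap.ker_eq_bot.mpr (ContinuousLinearEquiv.ofUnit u).injective
  have hrange : LinearMap.range (u : E →ₗ[ℂ] E) = ⊤ :=
    LinearMap.range_eq_top.mpr (ContinuousLinearEquiv.ofUnit u).surjective
  refine ⟨⟨?_, ?_⟩, ?_⟩
  · rw [hrange, Submodule.top_coe]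
    exact isClosed_univ
  · rw [hker]
    infer_instance
  · rw [indexNonpos, hker, rank_bot]
    exact zero_le

theorem specA_subset_spectrum (T : E →L[ℂ] E) : specA T ⊆ spectrum ℂ T := fun _ hμ ↦
  by_contra fun hσ ↦ hμ (exists_pos_mul_norm_le_of_isUnit (isUnit_opShift_of_notMem_spectrum hσ))

theorem specUW_subset_spectrum (T : E →L[ℂ] E) : specUW T ⊆ spectrum ℂ T := fun _ hμ ↦
  by_contra fun hσ ↦ hμ (isUSF_and_indexNonpos_of_isUnit (isUnit_opShift_of_notMem_spectrum hσ))

theorem mem_specA_of_apply_eq_smul {T : E →L[ℂ] E} {μ : ℂ} {x : E} (hx : x ≠ 0)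
    (hTx : T x = μ • x) : μ ∈ specA T := by
  rintro ⟨c, hc, hbound⟩
  have := hbound x
  rw [hTx, sub_self, norm_zero] at this
  exact this.not_gt (mul_pos hc (norm_pos_iff.mpr hx))

theorem ker_eq_bot_of_isUSF_of_indexNonpos {A : E →L[ℂ] E} (hA : IsUSF A)
    (hind : indexNonpos A) (hdense : Dense (LinearMap.range (A : E →ₗ[ℂ] E) : Set E)) :
    LinearMap.ker (A : E →ₗ[ℂ] E) = ⊥ := by
  have hrange : LinearMap.range (A : E →ₗ[ℂ] E) = ⊤ :=
    SetLike.coe_injective (hA.1.closure_eq.symm.trans hdense.closure_eq)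
  have : Subsingleton (E ⧸ LinearMap.range (A : E →ₗ[ℂ] E)) :=
    Submodule.Quotient.subsingleton_iff.mpr hrange
  rw [indexNonpos, rank_subsingleton' ℂ (E ⧸ LinearMap.range (A : E →ₗ[ℂ] E)),
    nonpos_iff_eq_zero] at hind
  exact Submodule.rank_eq_zero.mp hind

theorem mem_specUW_of_apply_eq_smul {T : E →L[ℂ] E} {μ : ℂ} {x : E} (hx : x ≠ 0)
    (hTx : T x = μ • x) (hdense : Dense (LinearMap.range (opShift T μ : E →ₗ[ℂ] E) : Set E)) :
    μ ∈ specUW T := by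
  rintro ⟨hUSF, hind⟩
  have hker := ker_eq_bot_of_isUSF_of_indexNonpos hUSF hind hdense
  refine hx (LinearMap.ker_eq_bot'.mp hker x ?_)
  simp [opShift, hTx]

theorem Eset_eq_singleton {T : E →L[ℂ] E} {μ : ℂ} (hσ : spectrum ℂ T = {μ}) {x : E} (hx : x ≠ 0)
    (hTx : T x = μ • x) : Eset T = {μ} := by
  ext ν
  simp only [Eset, IsIsolatedIn, hσ, mem_singleton_iff]
  refine ⟨fun h ↦ h.1.1, ?_⟩
  rintro rfl
  refine ⟨⟨rfl, 1, one_pos, inter_eq_left.mpr ?_⟩, x, hx, hTx⟩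
  simp

end SpectralSets

theorem sqrt_mul_add_one_le_two_mul_add_one {a : ℝ} (ha : 0 ≤ a) :
    √(a * (a + 1)) ≤ 2 * a + 1 :=
  Real.sqrt_le_iff.mpr ⟨by positivity, by nlinarith⟩

def bergmanWeight (q : ℝ) (k : ℕ) : ℂ :=
  ((√(((k : ℝ) + 1) * ((k : ℝ) + 2)) / (2 * ((k : ℝ) + 1) + 1) * q ^ (2 * (k + 1)) : ℝ) : ℂ)

theorem norm_bergmanWeight_le {q : ℝ} (hq : 0 ≤ q) (k : ℕ) :
    ‖bergmanWeight q k‖ ≤ q ^ (2 * (k + 1)) := by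
  have hk : (0 : ℝ) ≤ k + 1 := by positivity
  rw [bergmanWeight, Complex.norm_real, Real.norm_of_nonneg (by positivity)]
  refine mul_le_of_le_one_left (by positivity) (div_le_one_of_le₀ ?_ (by positivity))
  simpa [add_assoc, one_add_one_eq_two] using sqrt_mul_add_one_le_two_mul_add_one hk

theorem bergmanWeight_ne_zero {q : ℝ} (hq : 0 < q) (k : ℕ) : bergmanWeight q k ≠ 0 := by
  have : (0 : ℝ) < √(((k : ℝ) + 1) * ((k : ℝ) + 2)) := Real.sqrt_pos.mpr (by positivity)
  rw [bergmanWeight]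
  exact_mod_cast (by positivity : (0 : ℝ) < _).ne'

theorem tendsto_bergmanWeight {q : ℝ} (hq0 : 0 ≤ q) (hq1 : q < 1) :
    Tendsto (bergmanWeight q) atTop (𝓝 0) := by
  have hexp : Tendsto (fun k : ℕ ↦ 2 * (k + 1)) atTop atTop :=
    tendsto_atTop_mono (fun k ↦ by dsimp only [id]; omega) tendsto_id
  exact squeeze_zero_norm (norm_bergmanWeight_le hq0)
    ((tendsto_pow_atTop_nhds_zero_of_lt_one hq0 hq1).comp hexp)

/-- the weighted backward shift `S e₀ = 0`,
`S eₙ = (√(n(n+1))/(2n+1)) (1/J)^{2n} e_{n-1}` for `n ≥ 1` (equivalently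
`(Sx)ₖ = (√((k+1)(k+2))/(2k+3)) (1/J)^{2(k+1)} x_{k+1}`) is compact,
`σ(S) = σ_a(S) = σ_uw(S) = E(S) = {0}`, and `S` does not satisfy
property `(UW_E)`. -/
theorem stmt15_bergman_shift_example
    (J : ℝ) (hJ : 1 < J) (S : l2 →L[ℂ] l2)
    (hS : ∀ (x : l2) (k : ℕ), (S x) k =
      ((Real.sqrt (((k : ℝ) + 1) * ((k : ℝ) + 2)) / (2 * ((k : ℝ) + 1) + 1) *
        (1 / J) ^ (2 * (k + 1)) : ℝ) : ℂ) * x (k + 1)) :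
    IsCompactOperator ⇑S ∧
    spectrum ℂ S = {0} ∧
    specA S = {0} ∧
    specUW S = {0} ∧
    Eset S = {0} ∧
    ¬ PropUWE S := by
  have hq0 : 0 < 1 / J := by positivity
  have hq1 : 1 / J < 1 := (div_lt_one (by positivity)).mpr hJ
  have hshift : IsWeightedBackwardShift S (bergmanWeight (1 / J)) := hS
  set e : l2 := lp.single 2 0 1
  have he : e ≠ 0 := fun h ↦ one_ne_zero (α := ℂ) (by simpa [e] using congr_arg (· 0) h)
  have hSe : S e = (0 : ℂ) • e := by rw [zero_smul, hshift.apply_single_zero]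
  have h0A : (0 : ℂ) ∈ specA S := mem_specA_of_apply_eq_smul he hSe
  have hσ : spectrum ℂ S = {0} :=
    subset_antisymm (hshift.spectrum_subset_zero hq0.le hq1 (norm_bergmanWeight_le hq0.le))
      (singleton_subset_iff.mpr (specA_subset_spectrum S h0A))
  have hA : specA S = {0} := subset_antisymm (hσ ▸ specA_subset_spectrum S)
    (singleton_subset_iff.mpr h0A)
  have hUW : specUW S = {0} := subset_antisymm (hσ ▸ specUW_subset_spectrum S)
    (singleton_subset_iff.mpr (mem_specUW_of_apply_eq_smul he hSe
      (by simpa using hshift.dense_range (bergmanWeight_ne_zero hq0))))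
  have hE : Eset S = {0} := Eset_eq_singleton hσ he hSe
  refine ⟨hshift.isCompactOperator (tendsto_bergmanWeight hq0.le hq1), hσ, hA, hUW, hE, ?_⟩
  rw [PropUWE, hA, hUW, hE, Set.sdiff_self]
  exact (Set.singleton_nonempty 0).ne_empty.symm
end
end

section
/- Let H be an infinite-dimensional complex separable Hilbert space and T ∈ B(H) such that the Weyl spectrum σ_w(T) has no isolated points. Then for every compact operator K on H, every λ ∈ E(T + K) satisfies: T + K − λ is semi-Fredholm with ind(T + K − λ) ≤ 0. -/
noncomputable section

open Set MeasureTheory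

/-! If `T + K - λ` were not Fredholm of index zero, then `λ` would lie in `σ_w(T + K) ⊆ σ(T + K)`,
where it is isolated; since `σ_w(T + K) = σ_w(T)`, it would be an isolated point of `σ_w(T)`.

The invariance of the Weyl spectrum under compact perturbations is Weyl's theorem. A Fredholm
operator `S` of index zero is invertible up to a finite-rank operator (match `ker S` with
`(range S)ᗮ`). An operator `U + C` with `U` invertible and `C` compact factors as `U V (1 + F)` with
`V` invertible and `F` of finite rank, by approximating `U⁻¹ C` in norm by finite-rank operators.
Finally `1 + F` is the identity on the orthogonal complement of a finite-dimensional invariant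
subspace, so its index vanishes by rank-nullity. -/

namespace LinearMap

variable {K M : Type*} [Field K] [AddCommGroup M] [Module K M]

theorem finrank_ker_eq_finrank_quotient_range [FiniteDimensional K M] (A : M →ₗ[K] M) :
    Module.finrank K (ker A) = Module.finrank K (M ⧸ range A) := by
  have := A.finrank_range_add_finrank_ker
  have := (range A).finrank_quotient_add_finrank
  omega

section BlockDiagonal

variable {A : M →ₗ[K] M} {W V : Submodule K M} (hWV : IsCompl W V) (hW : ∀ x ∈ W, A x ∈ W)
  (hV : ∀ x ∈ V, A x = x)
include hWV hW hV

theorem ker_le_of_isCompl_of_eqOn : ker A ≤ W := by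
  intro x hx
  obtain ⟨w, v, hw, hv, rfl⟩ := Submodule.codisjoint_iff_exists_add_eq.1 hWV.codisjoint x
  have hAwv : A w + v = 0 := by rwa [mem_ker, map_add, hV v hv] at hx
  have hvW : v ∈ W := by
    rw [eq_neg_of_add_eq_zero_right hAwv]
    exact W.neg_mem (hW w hw)
  rw [(Submodule.disjoint_def.1 hWV.disjoint) v hvW hv, add_zero]
  exact hw

theorem range_eq_comap_range_restrict :
    range A = (range (A.restrict hW)).comap (W.projectionOnto V hWV) := by
  ext y
  constructor
  · rintro ⟨x, rfl⟩
    obtain ⟨w, v, hw, hv, rfl⟩ := Submodule.codisjoint_iff_exists_add_eq.1 hWV.codisjoint x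
    refine ⟨⟨w, hw⟩, Subtype.ext ?_⟩
    rw [map_add, hV v hv, map_add, Submodule.projectionOnto_apply_right hWV ⟨v, hv⟩, add_zero,
      Submodule.projectionOnto_apply_left hWV ⟨A w, hW w hw⟩]
    rfl
  · rintro ⟨w, hw⟩
    refine ⟨w + (y - W.projection V hWV y), ?_⟩
    rw [map_add, hV _ (Submodule.sub_projection_mem hWV y)]
    have : A w = W.projection V hWV y := congrArg Subtype.val hw
    rw [this, add_sub_cancel]

def kerEquivKerRestrictOfIsCompl : ker A ≃ₗ[K] ker (A.restrict hW) :=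
  (Submodule.comapSubtypeEquivOfLe (ker_le_of_isCompl_of_eqOn hWV hW hV)).symm.trans
    (LinearEquiv.ofEq _ _ (ker_restrict hW).symm)

noncomputable def quotientRangeEquivOfIsCompl :
    (M ⧸ range A) ≃ₗ[K] (W ⧸ range (A.restrict hW)) :=
  let g := (range (A.restrict hW)).mkQ ∘ₗ W.projectionOnto V hWV
  have hg : ker g = range A := by
    rw [ker_comp, Submodule.ker_mkQ, range_eq_comap_range_restrict hWV hW hV]
  (Submodule.quotEquivOfEq _ _ hg.symm).trans <| g.quotKerEquivOfSurjective <|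
    (Submodule.mkQ_surjective _).comp (Submodule.projectionOnto_surjective hWV)

theorem rank_ker_eq_rank_quotient_range_of_isCompl [FiniteDimensional K W] :
    Module.rank K (ker A) = Module.rank K (M ⧸ range A) := by
  rw [(kerEquivKerRestrictOfIsCompl hWV hW hV).rank_eq,
    (quotientRangeEquivOfIsCompl hWV hW hV).rank_eq, ← Module.finrank_eq_rank,
    ← Module.finrank_eq_rank, finrank_ker_eq_finrank_quotient_range]

end BlockDiagonal

theorem bijective_add_of_isCompl_range {R M N : Type*} [Ring R] [AddCommGroup M]
    [Module R M] [AddCommGroup N] [Module R N] {S : M →ₗ[R] N} {C : Submodule R N}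
    (hC : IsCompl (range S) C) (G : M →ₗ[R] C)
    (hG : Function.Bijective (G ∘ₗ (ker S).subtype)) :
    Function.Bijective (S + C.subtype ∘ₗ G) := by
  refine ⟨(injective_iff_map_eq_zero _).2 fun x hx ↦ ?_, fun y ↦ ?_⟩
  · have hSx : S x = 0 := by
      refine (Submodule.disjoint_def.1 hC.disjoint) _ (mem_range_self S x) ?_
      rw [eq_neg_of_add_eq_zero_left hx]
      exact C.neg_mem (G x).2
    have hGx : G x = 0 := by
      simpa [hSx] using hx
    have : (⟨x, hSx⟩ : ker S) = 0 := hG.1 (by simpa using hGx)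
    simpa using congrArg Subtype.val this
  · obtain ⟨_, c, ⟨x, rfl⟩, hc, rfl⟩ := Submodule.codisjoint_iff_exists_add_eq.1 hC.codisjoint y
    obtain ⟨n, hn⟩ := hG.2 (⟨c, hc⟩ - G x)
    refine ⟨x + n, ?_⟩
    have hGn : G n = ⟨c, hc⟩ - G x := hn
    simp [show S n = 0 from n.2, hGn]

end LinearMap

section FiniteRank

variable {𝕜 E : Type*} [RCLike 𝕜] [NormedAddCommGroup E]

theorem IsCompactOperator.of_hasFiniteRange {F : Type*} [NormedSpace 𝕜 E] [NormedAddCommGroup F]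
    [NormedSpace 𝕜 F] {f : E →L[𝕜] F} (hf : (f : E →ₗ[𝕜] F).HasFiniteRange) :
    IsCompactOperator f := by
  have : FiniteDimensional 𝕜 (LinearMap.range (f : E →ₗ[𝕜] F)) := Module.Finite.iff_fg.2 hf
  have hcod := isCompactOperator_of_locallyCompactSpace_dom
    (f.codRestrict (LinearMap.range (f : E →ₗ[𝕜] F)) (LinearMap.mem_range_self _))
  exact hcod.continuous_comp continuous_subtype_val

theorem finiteDimensional_orthogonal_ker_of_hasFiniteRange {F : Type*} [InnerProductSpace 𝕜 E]
    [CompleteSpace E] [NormedAddCommGroup F] [NormedSpace 𝕜 F] {f : E →L[𝕜] F}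
    (hf : (f : E →ₗ[𝕜] F).HasFiniteRange) :
    FiniteDimensional 𝕜 (LinearMap.ker (f : E →ₗ[𝕜] F))ᗮ := by
  have : CompleteSpace (LinearMap.ker (f : E →ₗ[𝕜] F)) := f.isClosed_ker.completeSpace_coe
  have : FiniteDimensional 𝕜 (LinearMap.range (f : E →ₗ[𝕜] F)) := Module.Finite.iff_fg.2 hf
  exact Module.Finite.equiv <| (Submodule.quotientEquivOfIsCompl _ _
    (Submodule.isCompl_orthogonal _)).symm.trans (f : E →ₗ[𝕜] F).quotKerEquivRange |>.symm

theorem Submodule.norm_sub_starProjection_le [InnerProductSpace 𝕜 E] {U : Submodule 𝕜 E}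
    [U.HasOrthogonalProjection] (y : E) {w : E} (hw : w ∈ U) :
    ‖y - U.starProjection y‖ ≤ ‖y - w‖ := by
  rw [starProjection_minimal]
  exact ciInf_le ⟨0, Set.forall_mem_range.2 fun _ ↦ norm_nonneg _⟩ (⟨w, hw⟩ : U)

theorem IsCompactOperator.exists_hasFiniteRange_norm_sub_lt [InnerProductSpace 𝕜 E]
    {C : E →L[𝕜] E} (hC : IsCompactOperator C) {ε : ℝ} (hε : 0 < ε) :
    ∃ F : E →L[𝕜] E, (F : E →ₗ[𝕜] E).HasFiniteRange ∧ ‖C - F‖ < ε := by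
  obtain ⟨t, -, htfin, hcover⟩ :=
    (hC.isCompact_closure_image_closedBall (𝕜₁ := 𝕜) 1).finite_cover_balls (half_pos hε)
  set W := Submodule.span 𝕜 t
  have : FiniteDimensional 𝕜 W := FiniteDimensional.span_of_finite 𝕜 htfin
  refine ⟨W.starProjection ∘L C, ?_, ?_⟩
  · refine Submodule.FG.of_le_of_isNoetherian (T := W) ?_
    rintro _ ⟨x, rfl⟩
    exact W.starProjection_apply_mem (C x)
  · refine (ContinuousLinearMap.opNorm_le_of_unit_norm (half_pos hε).le fun x hx ↦ ?_).trans_lt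
      (half_lt_self hε)
    obtain ⟨y, hyt, hy⟩ :=
      Set.mem_iUnion₂.1 <| hcover <| subset_closure ⟨x, by simp [hx], rfl⟩
    calc ‖(C - W.starProjection ∘L C) x‖ = ‖C x - W.starProjection (C x)‖ := rfl
      _ ≤ ‖C x - y‖ := Submodule.norm_sub_starProjection_le _ (Submodule.subset_span hyt)
      _ ≤ ε / 2 := (mem_ball_iff_norm.1 hy).le

open LinearMap.FiniteRangeSetoid in
theorem isClosed_range_one_add_of_hasFiniteRange [NormedSpace 𝕜 E] {F : E →L[𝕜] E}
    (hF : (F : E →ₗ[𝕜] E).HasFiniteRange) :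
    IsClosed (LinearMap.range ((1 + F : E →L[𝕜] E) : E →ₗ[𝕜] E) : Set E) := by
  have hequiv : ((1 + F : E →L[𝕜] E) : E →ₗ[𝕜] E) ≈ ((1 : E →L[𝕜] E) : E →ₗ[𝕜] E) := by
    rw [LinearMap.FiniteRangeSetoid.equiv_iff_hasFiniteRange]
    simpa using hF
  refine (((1 + F).isStrictMap_isClosed_range_iff_of_finiteRangeSetoid 1 hequiv).2 ?_).2
  exact ⟨Topology.IsStrictMap.id, by simp [ContinuousLinearMap.one_def, LinearMap.range_id]⟩

end FiniteRank

section Weyl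

variable {H : Type*} [NormedAddCommGroup H] [InnerProductSpace ℂ H]

/-- `specW T` is definitionally `{lam | ¬ IsWeyl (opShift T lam)}`. -/
def IsWeyl (S : H →L[ℂ] H) : Prop :=
  IsFredholmOp S ∧ indexZero S

theorem IsWeyl.isUnit_mul {U A : H →L[ℂ] H} (hU : IsUnit U) (hA : IsWeyl A) :
    IsWeyl (U * A) := by
  obtain ⟨⟨⟨hcl, hker⟩, -, hcoker⟩, hrank⟩ := hA
  obtain ⟨u, rfl⟩ := hU
  set e := ContinuousLinearEquiv.unitsEquiv ℂ H u
  have hcomp : ((u * A : H →L[ℂ] H) : H →ₗ[ℂ] H) = (e.toLinearEquiv : H →ₗ[ℂ] H) ∘ₗ A := rfl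
  have hker' :
      LinearMap.ker ((u * A : H →L[ℂ] H) : H →ₗ[ℂ] H) = LinearMap.ker (A : H →ₗ[ℂ] H) := by
    rw [hcomp, LinearEquiv.ker_comp]
  have hrange : LinearMap.range ((u * A : H →L[ℂ] H) : H →ₗ[ℂ] H) =
      (LinearMap.range (A : H →ₗ[ℂ] H)).map (e.toLinearEquiv : H →ₗ[ℂ] H) := by
    rw [hcomp, LinearMap.range_comp]
  have hcl' : IsClosed (LinearMap.range ((u * A : H →L[ℂ] H) : H →ₗ[ℂ] H) : Set H) := by
    rw [hrange, Submodule.map_coe]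
    exact e.toHomeomorph.isClosedMap _ hcl
  have hcoker' := Submodule.Quotient.equiv _ _ e.toLinearEquiv hrange.symm
  refine ⟨⟨⟨hcl', hker' ▸ hker⟩, hcl', Module.Finite.equiv hcoker'⟩, ?_⟩
  unfold indexZero
  rw [hker', ← hcoker'.rank_eq]
  exact hrank

variable [CompleteSpace H]

theorem isWeyl_one_add_of_hasFiniteRange {F : H →L[ℂ] H}
    (hF : (F : H →ₗ[ℂ] H).HasFiniteRange) :
    IsWeyl (1 + F) := by
  set N := LinearMap.ker (F : H →ₗ[ℂ] H)
  have : CompleteSpace N := F.isClosed_ker.completeSpace_coe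
  have : FiniteDimensional ℂ (LinearMap.range (F : H →ₗ[ℂ] H)) := Module.Finite.iff_fg.2 hF
  have := finiteDimensional_orthogonal_ker_of_hasFiniteRange hF
  -- `1 + F` leaves the finite-dimensional space `W` invariant and is the identity on `Wᗮ ≤ N`.
  set W := LinearMap.range (F : H →ₗ[ℂ] H) ⊔ Nᗮ
  have hW : ∀ x ∈ W, ((1 + F : H →L[ℂ] H) : H →ₗ[ℂ] H) x ∈ W := fun x hx ↦
    W.add_mem hx (Submodule.mem_sup_left (LinearMap.mem_range_self _ x))
  have hV : ∀ x ∈ Wᗮ, ((1 + F : H →L[ℂ] H) : H →ₗ[ℂ] H) x = x := by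
    intro x hx
    have hxN : x ∈ N := by
      rw [← Submodule.orthogonal_orthogonal N]
      exact Submodule.orthogonal_le le_sup_right hx
    simp [show F x = 0 from hxN]
  have hWV : IsCompl W Wᗮ := Submodule.isCompl_orthogonal W
  have hcl := isClosed_range_one_add_of_hasFiniteRange hF
  refine ⟨⟨⟨hcl, ?_⟩, hcl, ?_⟩, LinearMap.rank_ker_eq_rank_quotient_range_of_isCompl hWV hW hV⟩
  · exact Module.Finite.equiv (LinearMap.kerEquivKerRestrictOfIsCompl hWV hW hV).symm
  · exact Module.Finite.equiv (LinearMap.quotientRangeEquivOfIsCompl hWV hW hV).symm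

theorem IsUnit.isWeyl {U : H →L[ℂ] H} (hU : IsUnit U) : IsWeyl U := by
  simpa using (isWeyl_one_add_of_hasFiniteRange (F := (0 : H →L[ℂ] H))
    LinearMap.HasFiniteRange.zero).isUnit_mul hU

theorem IsWeyl.exists_hasFiniteRange_isUnit_add {S : H →L[ℂ] H} (hS : IsWeyl S) :
    ∃ F : H →L[ℂ] H, (F : H →ₗ[ℂ] H).HasFiniteRange ∧ IsUnit (S + F) := by
  obtain ⟨⟨⟨hcl, hker⟩, -, hcoker⟩, hrank⟩ := hS
  set R := LinearMap.range (S : H →ₗ[ℂ] H)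
  set N := LinearMap.ker (S : H →ₗ[ℂ] H)
  have : CompleteSpace R := hcl.completeSpace_coe
  have : CompleteSpace N := S.isClosed_ker.completeSpace_coe
  have hRC : IsCompl R Rᗮ := Submodule.isCompl_orthogonal R
  let eC := Submodule.quotientEquivOfIsCompl R Rᗮ hRC
  have : FiniteDimensional ℂ Rᗮ := Module.Finite.equiv eC
  obtain ⟨j⟩ : Nonempty (N ≃ₗ[ℂ] Rᗮ) := nonempty_linearEquiv_of_rank_eq (hrank.trans eC.rank_eq)
  let G : H →L[ℂ] Rᗮ :=
    LinearMap.toContinuousLinearMap (j : N →ₗ[ℂ] Rᗮ) ∘L N.orthogonalProjectionOnto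
  have hG : (G : H →ₗ[ℂ] Rᗮ) ∘ₗ N.subtype = (j : N →ₗ[ℂ] Rᗮ) := by
    ext x
    simp [G]
  refine ⟨Rᗮ.subtypeL ∘L G, ?_, ContinuousLinearMap.isUnit_iff_bijective.2 ?_⟩
  · refine Submodule.FG.of_le_of_isNoetherian (T := Rᗮ) ?_
    rintro _ ⟨x, rfl⟩
    exact (G x).2
  · exact LinearMap.bijective_add_of_isCompl_range hRC (G : H →ₗ[ℂ] Rᗮ) (hG ▸ j.bijective)

theorem IsUnit.isWeyl_add_isCompactOperator {U C : H →L[ℂ] H} (hU : IsUnit U)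
    (hC : IsCompactOperator C) : IsWeyl (U + C) := by
  obtain ⟨u, rfl⟩ := hU
  set C' := (↑u⁻¹ : H →L[ℂ] H) * C
  obtain ⟨F, hF, hC'F⟩ :=
    (hC.clm_comp (↑u⁻¹ : H →L[ℂ] H)).exists_hasFiniteRange_norm_sub_lt (C := C') one_pos
  set v := Units.oneSub (F - C') (by rwa [norm_sub_rev])
  have hsplit : (u : H →L[ℂ] H) + C = u * (v * (1 + ↑v⁻¹ * F)) := by
    rw [mul_add (v : H →L[ℂ] H), ← mul_assoc (v : H →L[ℂ] H), Units.mul_inv, mul_one, one_mul,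
      Units.val_oneSub, sub_sub_eq_add_sub, sub_add_cancel, mul_add, mul_one, ← mul_assoc,
      Units.mul_inv, one_mul]
  rw [hsplit]
  exact ((isWeyl_one_add_of_hasFiniteRange (hF.comp_left _)).isUnit_mul v.isUnit).isUnit_mul
    u.isUnit

theorem IsWeyl.add_isCompactOperator {S K : H →L[ℂ] H} (hS : IsWeyl S)
    (hK : IsCompactOperator K) : IsWeyl (S + K) := by
  obtain ⟨F, hF, hU⟩ := hS.exists_hasFiniteRange_isUnit_add
  rw [show S + K = (S + F) + (K - F) by abel]
  exact hU.isWeyl_add_isCompactOperator (hK.sub (IsCompactOperator.of_hasFiniteRange hF))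

theorem isWeyl_add_isCompactOperator_iff {S K : H →L[ℂ] H} (hK : IsCompactOperator K) :
    IsWeyl (S + K) ↔ IsWeyl S :=
  ⟨fun h ↦ by simpa using h.add_isCompactOperator (K := -K) hK.neg,
    fun h ↦ h.add_isCompactOperator hK⟩

theorem specW_add_isCompactOperator (T : H →L[ℂ] H) {K : H →L[ℂ] H}
    (hK : IsCompactOperator K) :
    specW (T + K) = specW T := by
  ext lam
  have hshift : opShift (T + K) lam = opShift T lam + K := by
    simp only [opShift]
    abel
  exact not_congr (hshift ▸ isWeyl_add_isCompactOperator_iff hK)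

theorem specW_subset_spectrum (T : H →L[ℂ] H) : specW T ⊆ spectrum ℂ T := by
  intro lam hlam
  by_contra h
  have hshift : opShift T lam = -(algebraMap ℂ (H →L[ℂ] H) lam - T) := by
    simp [opShift, Algebra.algebraMap_eq_smul_one, ContinuousLinearMap.one_def]
  exact hlam (hshift ▸ (spectrum.notMem_iff.1 h).neg.isWeyl)

end Weyl

theorem IsIsolatedIn.mono {S S' : Set ℂ} {lam : ℂ} (h : IsIsolatedIn S lam) (hlam : lam ∈ S')
    (hS' : S' ⊆ S) : IsIsolatedIn S' lam := by
  obtain ⟨-, ε, hε, hball⟩ := h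
  refine ⟨hlam, ε, hε, subset_antisymm (fun z hz ↦ ?_) ?_⟩
  · exact hball ▸ ⟨hS' hz.1, hz.2⟩
  · exact Set.singleton_subset_iff.2 ⟨hlam, Metric.mem_ball_self hε⟩

theorem Eset_compact_perturbation_semiFredholm_general
    {H : Type*} [NormedAddCommGroup H] [InnerProductSpace ℂ H] [CompleteSpace H]
    (T : H →L[ℂ] H) (hiso : ∀ lam : ℂ, ¬ IsIsolatedIn (specW T) lam) :
    ∀ K : H →L[ℂ] H, IsCompactOperator ⇑K → ∀ lam ∈ Eset (T + K),
      (IsUSF (opShift (T + K) lam) ∨ IsLSF (opShift (T + K) lam)) ∧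
        indexNonpos (opShift (T + K) lam) := by
  intro K hK lam hlam
  by_cases hW : IsWeyl (opShift (T + K) lam)
  · exact ⟨Or.inl hW.1.1, le_of_eq hW.2⟩
  · refine (hiso lam ?_).elim
    rw [← specW_add_isCompactOperator T hK]
    exact hlam.1.mono hW (specW_subset_spectrum _)

/-- if `σ_w(T)` has no isolated points then for every compact `K`,
every `λ ∈ E(T+K)` is such that `T + K - λ` is semi-Fredholm of nonpositive index. -/
theorem Eset_compact_perturbation_semiFredholm
    {H : Type*} [NormedAddCommGroup H] [InnerProductSpace ℂ H] [CompleteSpace H]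
    [TopologicalSpace.SeparableSpace H] (hinf : ¬ FiniteDimensional ℂ H)
    (T : H →L[ℂ] H) (hiso : ∀ lam : ℂ, ¬ IsIsolatedIn (specW T) lam) :
    ∀ K : H →L[ℂ] H, IsCompactOperator ⇑K → ∀ lam ∈ Eset (T + K),
      (IsUSF (opShift (T + K) lam) ∨ IsLSF (opShift (T + K) lam)) ∧
        indexNonpos (opShift (T + K) lam) :=
  Eset_compact_perturbation_semiFredholm_general T hiso
end
end
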